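/- If C ⊆ Σ^n is a balanced κ-weakly mutually uncorrelated code over an alphabet Σ of size q ∈ {2,4} partitioned into two halves, then |C| ≤ binom(n, n/2) · (q/2)^n / (n - κ + 1). -/

import Mathlib

/-!
The cyclic shifts of the codewords by `0, 1, …, n - κ` are balanced words, and they are
pairwise distinct: if the shift of `a` by `s` equals the shift of `b` by `t > s`, then the
prefix of `a` of length `n - (t - s) ≥ κ` equals the suffix of `b` of the same length, which
the κ-WMU property forbids. Hence `|C| · (n - κ + 1)` is at most the number of balanced words.
-/

open Finset

namespace Nat

theorem eq_of_mod_eq_of_lt_iff {m x y : ℕ} (hx : x < 2 * m) (hy : y < 2 * m)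
    (hlt : x < m ↔ y < m) (hmod : x % m = y % m) : x = y := by
  by_cases h : x < m
  · rwa [mod_eq_of_lt h, mod_eq_of_lt (hlt.1 h)] at hmod
  · rw [mod_eq_sub_mod (a := x) (by omega), mod_eq_sub_mod (a := y) (by omega),
      mod_eq_of_lt (a := x - m) (by omega), mod_eq_of_lt (a := y - m) (by omega)] at hmod
    omega

end Nat

section Words

variable {α : Type*} {n q : ℕ}

def cyclicShift (d : Fin n) (w : Fin n → α) : Fin n → α := fun i => w (i + d)

def IsWeaklyMutuallyUncorrelated (κ : ℕ) (C : Finset (Fin n → α)) : Prop :=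
  ∀ a ∈ C, ∀ b ∈ C, ∀ (l : ℕ), κ ≤ l → ∀ (hl : l < n),
    ¬ ∀ (i : ℕ) (hi : i < l), a ⟨i, by omega⟩ = b ⟨n - l + i, by omega⟩

theorem card_filter_cyclicShift [NeZero n] (P : α → Prop) [DecidablePred P] (d : Fin n)
    (w : Fin n → α) : #{i | P (cyclicShift d w i)} = #{i | P (w i)} :=
  card_equiv (Equiv.addRight d) fun i => by simp only [mem_filter, mem_univ, true_and]; rfl

theorem card_filter_card_filter_lt_le {m : ℕ} (hq : q = 2 * m) (k : ℕ) :
    #{w : Fin n → Fin q | #{i | (w i : ℕ) < m} = k} ≤ n.choose k * m ^ n := by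
  let encode (w : Fin n → Fin q) : Finset (Fin n) × (Fin n → Fin m) :=
    (({i | (w i : ℕ) < m} : Finset (Fin n)),
      fun i => ⟨w i % m, Nat.mod_lt _ (by have := (w i).isLt; omega)⟩)
  calc #{w : Fin n → Fin q | #{i | (w i : ℕ) < m} = k}
      ≤ #(univ.powersetCard k ×ˢ (univ : Finset (Fin n → Fin m))) := by
        refine card_le_card_of_injOn encode (fun w hw => ?_) (fun w _ w' _ h => ?_)
        · simp_all [encode, mem_powersetCard]
        · simp only [encode, Prod.mk.injEq, Finset.ext_iff, mem_filter, mem_univ, true_and,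
            funext_iff, Fin.ext_iff] at h
          ext i
          exact Nat.eq_of_mod_eq_of_lt_iff (hq ▸ (w i).isLt) (hq ▸ (w' i).isLt) (h.1 i) (h.2 i)
    _ = n.choose k * m ^ n := by simp [card_powersetCard]

namespace IsWeaklyMutuallyUncorrelated

variable {κ : ℕ} {C : Finset (Fin n → α)}

theorem not_forall_eq_shift (hC : IsWeaklyMutuallyUncorrelated κ C) {a b : Fin n → α}
    (ha : a ∈ C) (hb : b ∈ C) {d : Fin n} (hd : 0 < (d : ℕ)) (hκd : κ + d ≤ n) :
    ¬ ∀ i, a i = b (i + d) := by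
  intro h
  refine hC a ha b hb (n - d) (by omega) (by omega) fun i hi => ?_
  rw [h]
  congr 1
  ext
  rw [Fin.val_add_eq_of_add_lt] <;> simp <;> omega

theorem injOn_cyclicShift (hC : IsWeaklyMutuallyUncorrelated κ C) {m : Fin n}
    (hm : κ + m ≤ n) :
    Set.InjOn (fun p : (Fin n → α) × Fin n => cyclicShift p.2 p.1) ↑(C ×ˢ Iic m) := by
  have : NeZero n := ⟨m.pos.ne'⟩
  suffices key : ∀ a ∈ C, ∀ b ∈ C, ∀ s t : Fin n, s ≤ t → t ≤ m →
      cyclicShift s a = cyclicShift t b → s = t by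
    rintro ⟨a, s⟩ hs ⟨b, t⟩ ht h
    simp only [coe_product, Set.mem_prod, mem_coe, mem_Iic] at hs ht h
    have hst : s = t := by
      rcases le_total s t with hle | hle
      · exact key a hs.1 b ht.1 s t hle ht.2 h
      · exact (key b ht.1 a hs.1 t s hle hs.2 h.symm).symm
    subst hst
    refine Prod.ext (funext fun i => ?_) rfl
    simpa [cyclicShift] using congrFun h (i - s)
  intro a ha b hb s t hst htm h
  by_contra hne
  have hts : ((t - s : Fin n) : ℕ) = t - s := Fin.sub_val_of_le hst
  have hlt : (s : ℕ) < t := Fin.lt_def.1 (lt_of_le_of_ne hst hne)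
  refine hC.not_forall_eq_shift ha hb (d := t - s) (by omega) ?_ fun i => ?_
  · rw [Fin.le_iff_val_le_val] at htm
    omega
  · have e : i - s + t = i + (t - s) := by abel
    simpa [cyclicShift, e] using congrFun h (i - s)

theorem card_mul_le_card (hC : IsWeaklyMutuallyUncorrelated κ C) {m : Fin n}
    (hm : κ + m ≤ n) {T : Finset (Fin n → α)} (hT : ∀ w ∈ C, ∀ d ≤ m, cyclicShift d w ∈ T) :
    #C * (m + 1) ≤ #T :=
  calc #C * (m + 1) = #(C ×ˢ Iic m) := by rw [card_product, Fin.card_Iic]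
    _ ≤ #T := card_le_card_of_injOn _
      (fun p hp => hT p.1 (mem_product.1 hp).1 p.2 (mem_Iic.1 (mem_product.1 hp).2))
      (hC.injOn_cyclicShift hm)

end IsWeaklyMutuallyUncorrelated

end Words

/-- Upper bound on the size of a balanced κ-weakly mutually uncorrelated code over
an alphabet of size q ∈ {2,4}: |C| ≤ binom(n, n/2)·(q/2)^n / (n - κ + 1). -/
theorem stmt_11 (q n κ : ℕ) (hq : q = 2 ∨ q = 4)
    (hκ1 : 1 ≤ κ) (hκ2 : κ < n)
    (C : Finset (Fin n → Fin q))
    (hbal : ∀ c ∈ C, (Finset.univ.filter fun i => (c i).val < q / 2).card = n / 2)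
    (hWMU : ∀ a ∈ C, ∀ b ∈ C, ∀ (l : ℕ), κ ≤ l → ∀ (hl : l < n),
      ¬ ∀ (i : ℕ) (hi : i < l), a ⟨i, by omega⟩ = b ⟨n - l + i, by omega⟩) :
    (C.card : ℝ) ≤ (n.choose (n / 2) : ℝ) * ((q : ℝ) / 2) ^ n / ((n : ℝ) - κ + 1) := by
  have : NeZero n := ⟨by omega⟩
  have hcount : #C * (n - κ + 1) ≤ n.choose (n / 2) * (q / 2) ^ n :=
    calc #C * (n - κ + 1) ≤ #{w : Fin n → Fin q | #{i | (w i : ℕ) < q / 2} = n / 2} :=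
          IsWeaklyMutuallyUncorrelated.card_mul_le_card (m := ⟨n - κ, by omega⟩) hWMU
            (by simp only; omega) fun c hc d _ =>
              mem_filter.2 ⟨mem_univ _,
                (card_filter_cyclicShift (fun x : Fin q => (x : ℕ) < q / 2) d c).trans (hbal c hc)⟩
      _ ≤ n.choose (n / 2) * (q / 2) ^ n := card_filter_card_filter_lt_le (by omega) _
  have hhalf : ((q / 2 : ℕ) : ℝ) = q / 2 := by rcases hq with rfl | rfl <;> norm_num
  have hden : ((n - κ + 1 : ℕ) : ℝ) = n - κ + 1 := by push_cast [Nat.cast_sub hκ2.le]; ring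
  rw [le_div_iff₀ (by rw [← hden]; positivity), ← hden, ← hhalf]
  exact_mod_cast hcount
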